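/- arXiv:1301.1152 — 5 statements merged into one kernel-verified Lean document; each statement's English description precedes it below -/
import Mathlib

section
/- For every free filter ℱ on ℕ, the operation max on ℕ extended to ℕ_ℱ by max(n, ℱ) = max(ℱ, n) = ℱ and max(ℱ, ℱ) = ℱ is a continuous semilattice operation, i.e., ℕ_{ℱ,max} is a Hausdorff topological semilattice. -/
open Topology Set

/-- A filter is free if the intersection of all its members is empty. -/
def FreeF (F : Filter ℕ) : Prop := ⋂₀ F.sets = ∅

/-- The topology on ℕ_ℱ = ℕ ∪ {ℱ} (modelled as `Option ℕ`, with `none` the point ℱ):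
all points of ℕ are isolated, and the sets F ∪ {ℱ}, F ∈ ℱ, form a neighbourhood base at ℱ. -/
def nfTop (F : Filter ℕ) : TopologicalSpace (Option ℕ) where
  IsOpen U := none ∈ U → {n : ℕ | some n ∈ U} ∈ F
  isOpen_univ := fun _ => by simp
  isOpen_inter := fun U V hU hV h => Filter.inter_mem (hU h.1) (hV h.2)
  isOpen_sUnion := fun S hS h => by
    obtain ⟨U, hUS, hnU⟩ := h
    exact Filter.mem_of_superset (hS U hUS hnU) fun n hn => ⟨U, hUS, hn⟩

/-- min on ℕ extended to ℕ_ℱ by min(n,ℱ) = n, min(ℱ,ℱ) = ℱ. -/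
def minOp : Option ℕ → Option ℕ → Option ℕ
  | none, y => y
  | some a, none => some a
  | some a, some b => some (min a b)

/-- max on ℕ extended to ℕ_ℱ by max(n,ℱ) = ℱ = max(ℱ,ℱ). -/
def maxOp : Option ℕ → Option ℕ → Option ℕ
  | none, _ => none
  | _, none => none
  | some a, some b => some (max a b)

/-- `X` with operation `op` is a (Hausdorff) topological semilattice. -/
structure IsTopSemilattice (X : Type*) [TopologicalSpace X] (op : X → X → X) : Prop where
  t2 : T2Space X
  comm : ∀ a b, op a b = op b a
  idem : ∀ a, op a a = a
  assoc : ∀ a b c, op (op a b) c = op a (op b c)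
  cont : Continuous fun p : X × X => op p.1 p.2

/-- 𝓗-completeness: the image under any topological embedding which is a semilattice
homomorphism into a Hausdorff topological semilattice is closed. -/
def HComplete (X : Type*) [TopologicalSpace X] (op : X → X → X) : Prop :=
  ∀ (Y : Type*) [TopologicalSpace Y] (opY : Y → Y → Y), IsTopSemilattice Y opY →
    ∀ f : X → Y, Topology.IsEmbedding f →
      (∀ a b, f (op a b) = opY (f a) (f b)) → IsClosed (Set.range f)

/-- 𝓐𝓗-completeness: the image under any continuous semilattice homomorphism
into a Hausdorff topological semilattice is closed. -/
def AHComplete (X : Type*) [TopologicalSpace X] (op : X → X → X) : Prop :=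
  ∀ (Y : Type*) [TopologicalSpace Y] (opY : Y → Y → Y), IsTopSemilattice Y opY →
    ∀ f : X → Y, Continuous f →
      (∀ a b, f (op a b) = opY (f a) (f b)) → IsClosed (Set.range f)


lemma freeF_compl_singleton {F : Filter ℕ} (hF : FreeF F) (k : ℕ) : {k}ᶜ ∈ F := by
  have : k ∉ ⋂₀ F.sets := by rw [hF]; exact notMem_empty k
  simp only [mem_sInter, not_forall] at this
  obtain ⟨S, hS, hkS⟩ := this
  exact Filter.mem_of_superset hS (fun m hm hmk => hkS (by simpa using hmk ▸ hm))

lemma freeF_ge {F : Filter ℕ} (hF : FreeF F) (b : ℕ) : {n | b ≤ n} ∈ F := by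
  have : {n : ℕ | b ≤ n} = ⋂ k ∈ Finset.range b, ({k}ᶜ : Set ℕ) := by
    ext n
    simp only [mem_setOf_eq, mem_iInter, Finset.mem_range, mem_compl_iff, mem_singleton_iff]
    constructor
    · intro h k hk; omega
    · intro h; by_contra hc; exact h n (by omega) rfl
  rw [this]
  exact (Filter.biInter_finset_mem _).2 fun k _ => freeF_compl_singleton hF k

lemma isOpen_nf {F : Filter ℕ} {U : Set (Option ℕ)} :
    IsOpen[nfTop F] U ↔ (none ∈ U → {n | some n ∈ U} ∈ F) := Iff.rfl

/-- ℕ_{ℱ,max} is a Hausdorff topological semilattice. -/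
theorem nf_max_topSemilattice (F : Filter ℕ) (hF : FreeF F) :
    @IsTopSemilattice (Option ℕ) (nfTop F) maxOp := by
  letI := nfTop F
  have singleton_open : ∀ n : ℕ, IsOpen ({some n} : Set (Option ℕ)) := by
    intro n; rw [isOpen_nf]; intro h; simp at h
  have ball_open : ∀ S ∈ F, IsOpen (insert none (some '' S) : Set (Option ℕ)) := by
    intro S hS; rw [isOpen_nf]; intro _
    refine Filter.mem_of_superset hS fun n hn => ?_
    simp [hn]
  refine ⟨?_, ?_, ?_, ?_, ?_⟩
  · -- T2
    constructor
    intro x y hxy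
    match x, y with
    | some a, some b =>
      exact ⟨{some a}, {some b}, singleton_open a, singleton_open b, rfl, rfl,
        Set.disjoint_singleton.2 hxy⟩
    | some a, none =>
      refine ⟨{some a}, {some a}ᶜ, singleton_open a, ?_, rfl, by simp, disjoint_compl_right⟩
      rw [isOpen_nf]; intro _
      refine Filter.mem_of_superset (freeF_compl_singleton hF a) fun m hm => ?_
      simpa using fun h => hm (by simpa using h)
    | none, some b =>
      refine ⟨{some b}ᶜ, {some b}, ?_, singleton_open b, by simp, rfl, disjoint_compl_left⟩
      rw [isOpen_nf]; intro _
      refine Filter.mem_of_superset (freeF_compl_singleton hF b) fun m hm => ?_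
      simpa using fun h => hm (by simpa using h)
    | none, none => exact absurd rfl hxy
  · -- comm
    intro a b
    cases a <;> cases b <;> simp [maxOp, Nat.max_comm]
  · -- idem
    intro a
    match a with
    | none => rfl
    | some a => simp [maxOp]
  · -- assoc
    intro a b c
    cases a <;> cases b <;> cases c <;> simp [maxOp, Nat.max_assoc]
  · -- continuity
    rw [continuous_def]
    intro U hU
    rw [isOpen_prod_iff]
    intro x y hxy
    simp only [mem_preimage] at hxy
    match x, y with
    | some a, some b =>
      exact ⟨{some a}, {some b}, singleton_open a, singleton_open b, rfl, rfl, by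
        rintro ⟨u, v⟩ ⟨hu, hv⟩
        simp only [mem_singleton_iff] at hu hv
        simp [hu, hv, hxy]⟩
    | none, none =>
      have hS : {n | some n ∈ U} ∈ F := hU hxy
      refine ⟨insert none (some '' {n | some n ∈ U}), insert none (some '' {n | some n ∈ U}),
        ball_open _ hS, ball_open _ hS, by simp, by simp, ?_⟩
      rintro ⟨u, v⟩ ⟨hu, hv⟩
      simp only [mem_insert_iff, mem_image] at hu hv
      match u, v with
      | none, none => exact hxy
      | none, some m => exact hxy
      | some n, none => exact hxy
      | some n, some m =>
        obtain ⟨n', hn', hne⟩ := hu.resolve_left (by simp)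
        obtain ⟨m', hm', hme⟩ := hv.resolve_left (by simp)
        obtain rfl := Option.some.inj hne
        obtain rfl := Option.some.inj hme
        show some (max n' m') ∈ U
        rcases Nat.le_total n' m' with h | h
        · rw [Nat.max_eq_right h]; exact hm'
        · rw [Nat.max_eq_left h]; exact hn'
    | none, some b =>
      have hS : {n | some n ∈ U} ∈ F := hU hxy
      have hT : ({n | some n ∈ U} ∩ {n | b ≤ n}) ∈ F := Filter.inter_mem hS (freeF_ge hF b)
      refine ⟨insert none (some '' _), {some b}, ball_open _ hT, singleton_open b,
        by simp, rfl, ?_⟩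
      rintro ⟨u, v⟩ ⟨hu, hv⟩
      simp only [mem_singleton_iff] at hv
      subst hv
      simp only [mem_insert_iff, mem_image] at hu
      match u with
      | none => exact hxy
      | some n =>
        obtain ⟨n', ⟨hn1, hn2⟩, hne⟩ := hu.resolve_left (by simp)
        obtain rfl := Option.some.inj hne
        show some (max n' b) ∈ U
        rw [Nat.max_eq_left hn2]; exact hn1
    | some a, none =>
      have hS : {n | some n ∈ U} ∈ F := hU hxy
      have hT : ({n | some n ∈ U} ∩ {n | a ≤ n}) ∈ F := Filter.inter_mem hS (freeF_ge hF a)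
      refine ⟨{some a}, insert none (some '' _), singleton_open a, ball_open _ hT,
        rfl, by simp, ?_⟩
      rintro ⟨u, v⟩ ⟨hu, hv⟩
      simp only [mem_singleton_iff] at hu
      subst hu
      simp only [mem_insert_iff, mem_image] at hv
      match v with
      | none => exact hxy
      | some m =>
        obtain ⟨m', ⟨hm1, hm2⟩, hme⟩ := hv.resolve_left (by simp)
        obtain rfl := Option.some.inj hme
        show some (max a m') ∈ U
        rw [Nat.max_eq_right hm2]; exact hm1
end

section
/- Every 𝓗-completion of the discrete semilattice (ℕ, min) is topologically isomorphic to ℕ_{ℱ,min} for some free filter ℱ on ℕ. That is, if S is an 𝓗-complete Hausdorff topological semilattice containing (ℕ, min) with the discrete topology as a dense subsemilattice, then there is a free filter ℱ on ℕ and an isomorphism of topological semilattices S ≅ ℕ_{ℱ,min}. -/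
open Topology Set

/-
Let `x ∈ S` lie outside `ι(ℕ)`; such a point exists because `ι(ℕ)` itself is not 𝓗-complete: it
sits in `ℕ∞ = ω + 1` (with `min`) as a non-closed subsemilattice. Since the finite sets `ι(Iio N)`
are closed, `x` is adherent to every tail `ι(Ici N)`, on which `s ↦ op (ι n) s` is constantly
`ι n`; so `op (ι n) x = ι n`, and by density `x` is a neutral element of `S`. Two neutral elements
coincide, hence `S = ι(ℕ) ∪ {x}`, the points of `ι(ℕ)` are isolated, and `S` is `ℕ_{ℱ,min}` for the
trace `ℱ` on `ℕ` of the neighbourhood filter of `x`.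
-/

open Filter Function

theorem IsTopSemilattice.ulift {Y : Type*} [TopologicalSpace Y] {op : Y → Y → Y}
    (h : IsTopSemilattice Y op) :
    IsTopSemilattice (ULift Y) fun a b => ULift.up (op a.down b.down) where
  t2 := haveI := h.t2; inferInstance
  comm _ _ := congrArg ULift.up (h.comm _ _)
  idem _ := congrArg ULift.up (h.idem _)
  assoc _ _ _ := congrArg ULift.up (h.assoc _ _ _)
  cont := continuous_uliftUp.comp <|
    h.cont.comp (continuous_uliftDown.prodMap continuous_uliftDown)

theorem isTopSemilattice_min : IsTopSemilattice ℕ∞ min :=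
  ⟨inferInstance, min_comm, min_self, min_assoc, continuous_min⟩

theorem HComplete.not_surjective {S : Type*} [TopologicalSpace S] {op : S → S → S}
    (hHC : HComplete S op) {ι : ℕ → S} (hemb : IsEmbedding ι)
    (hhom : ∀ m n, ι (min m n) = op (ι m) (ι n)) : ¬ Surjective ι := by
  intro hsurj
  let h := hemb.toHomeomorphOfSurjective hsurj
  let f : S → ULift ℕ∞ := fun s => ULift.up (h.symm s : ℕ∞)
  have hf_ι (n : ℕ) : f (ι n) = ULift.up (n : ℕ∞) :=
    congrArg (fun k : ℕ => ULift.up (k : ℕ∞)) (h.symm_apply_apply n)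
  have hf : IsEmbedding f :=
    Homeomorph.ulift.symm.isEmbedding.comp (ENat.isEmbedding_natCast.comp h.symm.isEmbedding)
  have hf_hom : ∀ a b, f (op a b) = ULift.up (min (f a).down (f b).down) := by
    intro a b
    obtain ⟨m, rfl⟩ := hsurj a
    obtain ⟨n, rfl⟩ := hsurj b
    rw [← hhom, hf_ι, hf_ι, hf_ι, Nat.mono_cast.map_min]
  have hclosed := hHC _ _ isTopSemilattice_min.ulift f hf hf_hom
  obtain ⟨s, hs⟩ : ULift.up ⊤ ∈ range f :=
    hclosed.mem_of_tendsto ((continuous_uliftUp.tendsto _).comp ENat.tendsto_natCast_nhds_top)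
      (Eventually.of_forall fun n => ⟨ι n, hf_ι n⟩)
  exact ENat.natCast_ne_top _ (congrArg ULift.down hs)

theorem isOpen_singleton_of_denseRange {α S : Type*} [TopologicalSpace α] [DiscreteTopology α]
    [TopologicalSpace S] [T1Space S] {ι : α → S} (hemb : IsEmbedding ι) (hdense : DenseRange ι)
    (a : α) : IsOpen {ι a} := by
  obtain ⟨V, hV, hVa⟩ := hemb.isInducing.isOpen_iff.1 (isOpen_discrete {a})
  have hV_range : V ∩ range ι = {ι a} := by
    rw [← image_preimage_eq_inter_range, hVa, image_singleton]
  suffices V = {ι a} from this ▸ hV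
  refine (singleton_subset_iff.2 ?_).antisymm' fun s hs => ?_
  · exact hVa.symm.subset rfl
  · simpa [hV_range] using hV.inter_closure ⟨hs, hdense s⟩

section Absorption

variable {S : Type*} [TopologicalSpace S] {op : S → S → S} {ι : ℕ → S} {x : S}

theorem mem_closure_image_Ici_of_notMem_range [T1Space S] (hdense : DenseRange ι)
    (hx : x ∉ range ι) (N : ℕ) : x ∈ closure (ι '' Ici N) := by
  have hx_cl : x ∈ closure (range ι) := hdense x
  rw [← image_univ, ← Iio_union_Ici, image_union, closure_union,
    ((finite_Iio N).image ι).isClosed.closure_eq] at hx_cl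
  exact hx_cl.resolve_left fun h => hx (image_subset_range _ _ h)

theorem freeF_comap_nhds [T1Space S] (hx : x ∉ range ι) : FreeF (comap ι (𝓝 x)) := by
  refine eq_empty_iff_forall_notMem.2 fun n hn => ?_
  have hmem : ι ⁻¹' {ι n}ᶜ ∈ comap ι (𝓝 x) :=
    preimage_mem_comap (compl_singleton_mem_nhds fun h => hx ⟨n, h.symm⟩)
  exact hn _ hmem rfl

variable (hS : IsTopSemilattice S op) (hhom : ∀ m n, ι (min m n) = op (ι m) (ι n))
  (hdense : DenseRange ι)
include hS hhom hdense

theorem op_apply_eq_of_notMem_range (hx : x ∉ range ι) (n : ℕ) : op (ι n) x = ι n := by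
  have := hS.t2
  have hclosed : IsClosed {s | op (ι n) s = ι n} :=
    isClosed_eq (hS.cont.comp (continuous_const.prodMk continuous_id)) continuous_const
  refine closure_minimal ?_ hclosed (mem_closure_image_Ici_of_notMem_range hdense hx n)
  rintro _ ⟨m, hm, rfl⟩
  exact (hhom n m).symm.trans (congrArg ι (min_eq_left hm))

theorem op_eq_left_of_notMem_range (hx : x ∉ range ι) (s : S) : op s x = s := by
  have := hS.t2
  refine hdense.induction_on s (isClosed_eq ?_ continuous_id) fun n => ?_
  · exact hS.cont.comp (continuous_id.prodMk continuous_const)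
  · exact op_apply_eq_of_notMem_range hS hhom hdense hx n

theorem eq_of_notMem_range {y : S} (hx : x ∉ range ι) (hy : y ∉ range ι) : x = y := by
  rw [← op_eq_left_of_notMem_range hS hhom hdense hy x, hS.comm,
    op_eq_left_of_notMem_range hS hhom hdense hx y]

theorem elim_minOp (hx : x ∉ range ι) :
    ∀ o p, (minOp o p).elim x ι = op (o.elim x ι) (p.elim x ι)
  | none, _ => by
    rw [hS.comm]
    exact (op_eq_left_of_notMem_range hS hhom hdense hx _).symm
  | some _, none => (op_eq_left_of_notMem_range hS hhom hdense hx _).symm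
  | some a, some b => hhom a b

end Absorption

theorem Option.elim_bijective {α β : Type*} {x : β} {ι : α → β} (hι : Injective ι)
    (hx : x ∉ range ι) (hcover : ∀ y ∉ range ι, y = x) :
    Bijective fun o : Option α => o.elim x ι := by
  refine ⟨?_, fun y => ?_⟩
  · rintro (_ | a) (_ | b) h
    · rfl
    · exact (hx ⟨b, h.symm⟩).elim
    · exact (hx ⟨a, h⟩).elim
    · exact congrArg some (hι h)
  · by_cases hy : y ∈ range ι
    · obtain ⟨a, rfl⟩ := hy
      exact ⟨some a, rfl⟩
    · exact ⟨none, (hcover y hy).symm⟩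

theorem pure_none_sup_map_some_comap_some {α : Type*} {G : Filter (Option α)}
    (h : pure none ≤ G) : pure none ⊔ map some (comap some G) = G := by
  ext U
  rw [mem_sup, mem_pure, mem_map, mem_comap]
  refine ⟨fun ⟨hnone, V, hV, hVU⟩ => mem_of_superset hV ?_, fun hU => ⟨h hU, U, hU, subset_rfl⟩⟩
  rintro (_ | a) ha
  · exact hnone
  · exact hVU ha

theorem nhds_some_nfTop (F : Filter ℕ) (n : ℕ) : @nhds _ (nfTop F) (some n) = pure (some n) :=
  (@isOpen_singleton_iff_nhds_eq_pure _ (nfTop F) _).1 fun h => by simp at h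

theorem nhds_none_nfTop (F : Filter ℕ) : @nhds _ (nfTop F) none = pure none ⊔ map some F := by
  let := nfTop F
  ext U
  rw [mem_sup, mem_pure, mem_map]
  refine ⟨fun hU => ?_, fun ⟨hnone, hF⟩ => IsOpen.mem_nhds (fun _ => hF) hnone⟩
  obtain ⟨V, hVU, hV, hnV⟩ := mem_nhds_iff.1 hU
  exact ⟨hVU hnV, mem_of_superset (hV hnV) fun n hn => hVU hn⟩

theorem isInducing_nfTop_comap {S : Type*} [TopologicalSpace S] {g : Option ℕ → S}
    (hg : Injective g) (hopen : ∀ n, IsOpen {g (some n)}) :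
    @IsInducing _ _ (nfTop (comap (g ∘ some) (𝓝 (g none)))) _ g := by
  let := nfTop (comap (g ∘ some) (𝓝 (g none)))
  rw [isInducing_iff_nhds]
  rintro (_ | n)
  · rw [nhds_none_nfTop, ← comap_comap]
    exact pure_none_sup_map_some_comap_some
      (map_le_iff_le_comap.1 ((Filter.map_pure g none).trans_le (pure_le_nhds _)))
  · rw [nhds_some_nfTop, (isOpen_singleton_iff_nhds_eq_pure _).1 (hopen n), ← Filter.map_pure g,
      comap_map hg]

/-- every 𝓗-completion of the discrete semilattice (ℕ, min) is
topologically isomorphic to ℕ_{ℱ,min} for some free filter ℱ on ℕ. -/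
theorem hCompletion_min_iso (S : Type) [TopologicalSpace S] (op : S → S → S)
    (hS : IsTopSemilattice S op) (hHC : HComplete S op)
    (ι : ℕ → S) (hemb : Topology.IsEmbedding ι)
    (hhom : ∀ m n : ℕ, ι (min m n) = op (ι m) (ι n))
    (hdense : DenseRange ι) :
    ∃ F : Filter ℕ, FreeF F ∧ ∃ e : S ≃ Option ℕ,
      @Continuous S (Option ℕ) _ (nfTop F) e ∧
      @Continuous (Option ℕ) S (nfTop F) _ e.symm ∧
      ∀ a b : S, e (op a b) = minOp (e a) (e b) := by
  have := hS.t2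
  obtain ⟨x, hx⟩ : ∃ x, x ∉ range ι := by
    simpa [Surjective] using hHC.not_surjective hemb hhom
  have hg : Bijective fun o : Option ℕ => o.elim x ι :=
    Option.elim_bijective hemb.injective hx fun y hy => eq_of_notMem_range hS hhom hdense hy hx
  let := nfTop (comap ι (𝓝 x))
  let e := (Equiv.ofBijective _ hg).toHomeomorphOfIsInducing
    (isInducing_nfTop_comap hg.injective (isOpen_singleton_of_denseRange hemb hdense))
  refine ⟨_, freeF_comap_nhds hx, e.symm.toEquiv, e.symm.continuous, e.continuous, fun a b => ?_⟩
  obtain ⟨o, rfl⟩ := e.surjective a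
  obtain ⟨p, rfl⟩ := e.surjective b
  change e.symm (op (e o) (e p)) = minOp (e.symm (e o)) (e.symm (e p))
  rw [e.symm_apply_apply, e.symm_apply_apply, e.symm_apply_eq]
  exact (elim_minOp hS hhom hdense hx o p).symm
end

section
/- Let ℱ be a free filter on ℕ and let F ∈ ℱ have infinite complement ℕ \ F. Then E = (ℕ_{ℱ,min} × {0}) ∪ ((ℕ \ F) × {1}) is a closed subsemilattice of the product topological semilattice ℕ_{ℱ,min} × E₂, where E₂ = {0,1} is the discrete min-semilattice. -/
open Topology Set

/-- The product topology on ℕ_{ℱ,min} × E₂ (E₂ = {0,1} discrete, modelled as `Bool`). -/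
def prodTopB (F : Filter ℕ) : TopologicalSpace (Option ℕ × Bool) :=
  @instTopologicalSpaceProd _ _ (nfTop F) inferInstance

/-- The coordinatewise semilattice operation on ℕ_{ℱ,min} × E₂ (min on both coordinates). -/
def pOpB (p q : Option ℕ × Bool) : Option ℕ × Bool := (minOp p.1 q.1, p.2 && q.2)

/-- The subset E = (ℕ_{ℱ,min} × {0}) ∪ ((ℕ \ F) × {1}). -/
def EsetB (Fs : Set ℕ) : Set (Option ℕ × Bool) :=
  (Set.univ ×ˢ {false}) ∪ ((some '' Fsᶜ) ×ˢ {true})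

/-- The ideal I = ℕ_{ℱ,min} × {0}. -/
def IsetB : Set (Option ℕ × Bool) := Set.univ ×ˢ {false}

/-- E = (ℕ_{ℱ,min} × {0}) ∪ ((ℕ \ F) × {1}) is a closed subsemilattice of
the product topological semilattice ℕ_{ℱ,min} × E₂. -/
theorem EsetB_closed_subsemilattice (F : Filter ℕ) (hF : FreeF F)
    (Fs : Set ℕ) (hFs : Fs ∈ F) (hinf : Fsᶜ.Infinite) :
    @IsClosed (Option ℕ × Bool) (prodTopB F) (EsetB Fs) ∧
      ∀ p ∈ EsetB Fs, ∀ q ∈ EsetB Fs, pOpB p q ∈ EsetB Fs := by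
  constructor
  · rw [← @isOpen_compl_iff _ _ (prodTopB F)]
    have hcompl : (EsetB Fs)ᶜ = ({none} ∪ some '' Fs) ×ˢ {true} := by
      ext ⟨x, b⟩
      simp only [EsetB, Set.mem_compl_iff, Set.mem_union, Set.mem_prod, Set.mem_univ,
        Set.mem_singleton_iff, Set.mem_image, true_and]
      cases b <;> cases x <;> simp
    rw [hcompl]
    exact @IsOpen.prod _ _ (nfTop F) _ _ _
      (fun _ => Filter.mem_of_superset hFs fun n hn => Or.inr ⟨n, hn, rfl⟩)
      (isOpen_discrete _)
  · rintro ⟨x, bx⟩ hp ⟨y, by'⟩ hq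
    simp only [EsetB, Set.mem_union, Set.mem_prod, Set.mem_univ, Set.mem_singleton_iff,
      true_and] at hp hq ⊢
    cases bx
    · exact Or.inl rfl
    cases by'
    · left; simp [pOpB]
    · rcases hp with h | ⟨hx, -⟩
      · exact absurd h (by simp)
      rcases hq with h | ⟨hy, -⟩
      · exact absurd h (by simp)
      obtain ⟨a, ha, rfl⟩ := hx
      obtain ⟨b, hb, rfl⟩ := hy
      right
      refine ⟨⟨min a b, ?_, rfl⟩, rfl⟩
      rcases min_cases a b with ⟨h, _⟩ | ⟨h, _⟩ <;> rw [h] <;> assumption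
end

section
/- If ℱ is the filter of cofinite subsets of ℕ, then the topological semilattice ℕ_{ℱ,min} × E₂ is compact, and hence every closed subsemilattice of it is 𝓐𝓗-complete (continuous homomorphic images of compact semilattices into Hausdorff topological semilattices are closed). -/
open Topology Set

/-! By the very definition of its topology, the sequence `n ↦ n` converges along ℱ to the point
ℱ of ℕ_ℱ. For the cofinite filter this makes ℕ_ℱ a convergent sequence together with its limit,
hence compact, and so is its product with the finite space E₂. Closed subspaces of a compact
space are compact, and a compact image in a Hausdorff space is closed; the semilattice
structure plays no role. -/

theorem tendsto_some_nhds_none (F : Filter ℕ) :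
    Filter.Tendsto some F (@nhds _ (nfTop F) none) := by
  let _ := nfTop F
  exact tendsto_nhds.mpr fun _ hU hnone => hU hnone

theorem compactSpace_nfTop_cofinite : @CompactSpace (Option ℕ) (nfTop Filter.cofinite) := by
  let _ := nfTop Filter.cofinite
  refine ⟨?_⟩
  have hcover : insert none (range some) = (univ : Set (Option ℕ)) := by
    ext (_ | n) <;> simp
  simpa only [hcover] using
    (tendsto_some_nhds_none Filter.cofinite).isCompact_insert_range_of_cofinite

theorem AHComplete.of_compactSpace {X : Type*} [TopologicalSpace X] [CompactSpace X]
    (op : X → X → X) : AHComplete X op := by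
  intro Y _ _ hY f hf _
  have := hY.t2
  exact (isCompact_range hf).isClosed

/-- if ℱ is the filter of cofinite subsets of ℕ, then ℕ_{ℱ,min} × E₂ is
compact, and every closed subsemilattice of it is 𝓐𝓗-complete. -/
theorem cofinite_prod_compact_and_AHComplete :
    @CompactSpace (Option ℕ × Bool) (prodTopB Filter.cofinite) ∧
      ∀ E : Set (Option ℕ × Bool), @IsClosed _ (prodTopB Filter.cofinite) E →
        ∀ hsub : ∀ p ∈ E, ∀ q ∈ E, pOpB p q ∈ E,
          @AHComplete E (@instTopologicalSpaceSubtype _ _ (prodTopB Filter.cofinite))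
            (fun a b => ⟨pOpB a.1 b.1, hsub a.1 a.2 b.1 b.2⟩) := by
  let _ := nfTop Filter.cofinite
  have := compactSpace_nfTop_cofinite
  have hcompact : @CompactSpace _ (prodTopB Filter.cofinite) :=
    inferInstanceAs (CompactSpace (Option ℕ × Bool))
  refine ⟨hcompact, fun E hE _ => ?_⟩
  have := isCompact_iff_compactSpace.mp hE.isCompact
  exact AHComplete.of_compactSpace _
end

section
/- The Rees quotient E/I_κ from the previous construction is topologically isomorphic to the orthogonal sum of λ-many copies of the discrete semilattice (ℕ, max) with an isolated zero adjoined: i.e., the discrete semilattice on {0} ∪ ((ℕ \ F) × (λ \ κ)) where (n,a)·(m,a) = (max(n,m), a) and (n,a)·(m,b) = 0 for a ≠ b; this discrete semilattice is not 𝓗-complete. -/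
open Topology Set

-- The semilattice operation of E_λ = {0} ∪ λ (modelled as `Option L`, `none` the zero):
-- x·y = x if x = y and x·y = 0 otherwise.
open Classical in
noncomputable def eOp {L : Type*} (x y : Option L) : Option L := if x = y then x else none

/-- The product topology on ℕ_{ℱ,max} × E_λ (E_λ discrete). -/
def prodTopL (F : Filter ℕ) (L : Type*) : TopologicalSpace (Option ℕ × Option L) :=
  @instTopologicalSpaceProd _ _ (nfTop F) ⊥

/-- The coordinatewise operation on ℕ_{ℱ,max} × E_λ. -/
noncomputable def pOpL {L : Type*} (p q : Option ℕ × Option L) : Option ℕ × Option L :=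
  (maxOp p.1 q.1, eOp p.2 q.2)

/-- The subset E = (ℕ_{ℱ,max} × {0}) ∪ ((ℕ \ F) × λ) of ℕ_{ℱ,max} × E_λ. -/
def EsetL (Fs : Set ℕ) (L : Type*) : Set (Option ℕ × Option L) :=
  (Set.univ ×ˢ {none}) ∪ ((some '' Fsᶜ) ×ˢ (some '' Set.univ))

/-- The ideal I_κ = (ℕ_{ℱ,max} × {0}) ∪ ((ℕ \ F) × κ) for κ ⊆ λ. -/
def IsetL (Fs : Set ℕ) {L : Type*} (κ : Set L) : Set (Option ℕ × Option L) :=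
  (Set.univ ×ˢ {none}) ∪ ((some '' Fsᶜ) ×ˢ (some '' κ))

/-- The subspace topology on E ⊆ ℕ_{ℱ,max} × E_λ. -/
def subTopL (F : Filter ℕ) (Fs : Set ℕ) (L : Type*) : TopologicalSpace (EsetL Fs L) :=
  @instTopologicalSpaceSubtype _ _ (prodTopL F L)

/-- The Rees congruence on E identifying all points of the ideal I_κ. -/
def reesSetoidL (Fs : Set ℕ) {L : Type*} (κ : Set L) : Setoid (EsetL Fs L) where
  r a b := a = b ∨ ((a : Option ℕ × Option L) ∈ IsetL Fs κ ∧
    (b : Option ℕ × Option L) ∈ IsetL Fs κ)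
  iseqv := by
    refine ⟨fun _ => Or.inl rfl, ?_, ?_⟩
    · rintro a b (rfl | h)
      · exact Or.inl rfl
      · exact Or.inr ⟨h.2, h.1⟩
    · rintro a b c (rfl | h1) h2
      · exact h2
      · rcases h2 with rfl | h2
        · exact Or.inr h1
        · exact Or.inr ⟨h1.1, h2.2⟩

/-- The quotient topology on the Rees quotient E/I_κ. -/
def qTopL (F : Filter ℕ) (Fs : Set ℕ) {L : Type*} (κ : Set L) :
    TopologicalSpace (Quotient (reesSetoidL Fs κ)) :=
  (subTopL F Fs L).coinduced (Quotient.mk (reesSetoidL Fs κ))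

-- The orthogonal sum of (λ \ κ)-many copies of (ℕ \ F, max) with a zero adjoined,
-- modelled as `Option ({n // n ∈ Fsᶜ} × {a // a ∉ κ})` with `none` the zero:
-- (n,a)·(m,a) = (max n m, a) and (n,a)·(m,b) = 0 for a ≠ b.
open Classical in
noncomputable def osOp (Fs : Set ℕ) {L : Type*} (κ : Set L) :
    Option ({n : ℕ // n ∈ Fsᶜ} × {a : L // a ∉ κ}) →
    Option ({n : ℕ // n ∈ Fsᶜ} × {a : L // a ∉ κ}) →
    Option ({n : ℕ // n ∈ Fsᶜ} × {a : L // a ∉ κ})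
  | some p, some q =>
      if p.2 = q.2 then some (if p.1.1 ≤ q.1.1 then q.1 else p.1, p.2) else none
  | _, _ => none

/-!
On `E` the map which keeps a point `(n, a)` with `a ∉ κ` and sends everything else to `0` is a
homomorphism onto the orthogonal sum whose kernel is exactly the Rees congruence of `I_κ`. Its
fibres are open in `E`: the points `(n, a)` are isolated, and inside `E` membership in `I_κ`
depends only on the discrete second coordinate. Hence it descends to a topological isomorphism
of `E/I_κ` with the discrete orthogonal sum.

The orthogonal sum `S` is not 𝓗-complete: fix `a₀ ∉ κ` and send `s ∈ S` to
`(fun a => position of s in the a-th chain (⊤ off it), label of s)` in the Hausdorff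
topological semilattice `((λ \ κ) → (ℕ∞, max)) × E_{λ \ κ}`. This is a homomorphic embedding of
the discrete `S`, and the images of the chain `(n, a₀)`, `n ∈ ℕ \ F`, converge to `(⊤, a₀)`,
which is not in the image.
-/

open Filter

universe u v w

abbrev OrthSum (Fs : Set ℕ) {L : Type*} (κ : Set L) :=
  Option ({n : ℕ // n ∈ Fsᶜ} × {a : L // a ∉ κ})

@[simp] lemma osOp_none_left {Fs : Set ℕ} {L : Type*} {κ : Set L} (x : OrthSum Fs κ) :
    osOp Fs κ none x = none := by
  cases x <;> rfl

@[simp] lemma osOp_none_right {Fs : Set ℕ} {L : Type*} {κ : Set L} (x : OrthSum Fs κ) :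
    osOp Fs κ x none = none := by
  cases x <;> rfl

namespace IsTopSemilattice

variable {X Y : Type*} [TopologicalSpace X] [TopologicalSpace Y]

lemma prod {opX : X → X → X} {opY : Y → Y → Y} (hX : IsTopSemilattice X opX)
    (hY : IsTopSemilattice Y opY) :
    IsTopSemilattice (X × Y) fun p q => (opX p.1 q.1, opY p.2 q.2) where
  t2 := haveI := hX.t2; haveI := hY.t2; inferInstance
  comm a b := by rw [hX.comm, hY.comm]
  idem a := by rw [hX.idem, hY.idem]
  assoc a b c := by rw [hX.assoc, hY.assoc]
  cont := (hX.cont.comp (continuous_fst.fst.prodMk continuous_snd.fst)).prodMk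
    (hY.cont.comp (continuous_fst.snd.prodMk continuous_snd.snd))

lemma pi {ι : Type*} {Z : ι → Type*} [∀ i, TopologicalSpace (Z i)] {op : ∀ i, Z i → Z i → Z i}
    (h : ∀ i, IsTopSemilattice (Z i) (op i)) :
    IsTopSemilattice (∀ i, Z i) fun f g i => op i (f i) (g i) where
  t2 := haveI := fun i => (h i).t2; inferInstance
  comm _ _ := funext fun i => (h i).comm _ _
  idem _ := funext fun i => (h i).idem _
  assoc _ _ _ := funext fun i => (h i).assoc _ _ _
  cont := continuous_pi fun i =>
    (h i).cont.comp ((continuous_apply i).comp continuous_fst |>.prodMk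
      ((continuous_apply i).comp continuous_snd))

lemma sup [SemilatticeSup X] [T2Space X] [ContinuousSup X] : IsTopSemilattice X (· ⊔ ·) where
  t2 := inferInstance
  comm := sup_comm
  idem := sup_idem
  assoc := sup_assoc
  cont := continuous_sup

lemma homeomorph {op : X → X → X} (h : IsTopSemilattice X op) (e : X ≃ₜ Y) :
    IsTopSemilattice Y fun a b => e (op (e.symm a) (e.symm b)) where
  t2 := haveI := h.t2; e.symm.isEmbedding.t2Space
  comm a b := by rw [h.comm]
  idem a := by simp [h.idem]
  assoc a b c := by simp [h.assoc]
  cont := e.continuous.comp (h.cont.comp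
    ((e.symm.continuous.comp continuous_fst).prodMk (e.symm.continuous.comp continuous_snd)))

end IsTopSemilattice

lemma Topology.IsEmbedding.of_isOpen_preimage_singleton {X Y : Type*} [TopologicalSpace X]
    [DiscreteTopology X] [TopologicalSpace Y] {f : X → Y}
    (h : ∀ x, ∃ U, IsOpen U ∧ f ⁻¹' U = {x}) : IsEmbedding f := by
  refine ⟨⟨?_⟩, fun x y hxy => ?_⟩
  · rw [DiscreteTopology.eq_bot (α := X)]
    exact (eq_bot_of_singletons_open fun x => isOpen_induced_iff.2 (h x)).symm
  · obtain ⟨U, -, hU⟩ := h y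
    have : x ∈ f ⁻¹' U := by rw [Set.mem_preimage, hxy, ← Set.mem_preimage, hU]; rfl
    rwa [hU] at this

lemma not_hComplete_of_isEmbedding {X : Type u} {Y : Type v} [TopologicalSpace X]
    [TopologicalSpace Y] {op : X → X → X} {opY : Y → Y → Y} (hY : IsTopSemilattice Y opY)
    {f : X → Y} (hf : IsEmbedding f) (hom : ∀ a b, f (op a b) = opY (f a) (f b))
    (hnc : ¬ IsClosed (Set.range f)) : ¬ HComplete.{u, max v w} X op := by
  intro h
  have e : Y ≃ₜ ULift.{w} Y := Homeomorph.ulift.symm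
  refine hnc (e.isClosed_image.1 ?_)
  rw [← Set.range_comp]
  exact h _ _ (hY.homeomorph e) (e ∘ f) (e.isEmbedding.comp hf) fun a b => by simp [hom]

section Rees

variable {Fs : Set ℕ} {L : Type*} {κ : Set L}

open Classical in
noncomputable def toOrthSum (Fs : Set ℕ) {L : Type*} (κ : Set L) :
    Option ℕ × Option L → OrthSum Fs κ
  | (some n, some a) => if h : n ∈ Fsᶜ ∧ a ∉ κ then some (⟨n, h.1⟩, ⟨a, h.2⟩) else none
  | _ => none

lemma toOrthSum_eq_none_iff {p : Option ℕ × Option L} (hp : p ∈ EsetL Fs L) :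
    toOrthSum Fs κ p = none ↔ p ∈ IsetL Fs κ := by
  obtain ⟨x, y⟩ := p
  rcases hp with ⟨-, rfl⟩ | ⟨⟨n, hn, rfl⟩, ⟨a, -, rfl⟩⟩
  · cases x <;> simp [toOrthSum, IsetL]
  · simp_all [toOrthSum, IsetL]

lemma mem_IsetL_iff {p : Option ℕ × Option L} (hp : p ∈ EsetL Fs L) :
    p ∈ IsetL Fs κ ↔ ∀ a, p.2 = some a → a ∈ κ := by
  obtain ⟨x, y⟩ := p
  rcases hp with ⟨-, rfl⟩ | ⟨⟨n, hn, rfl⟩, ⟨a, -, rfl⟩⟩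
  · simp [IsetL]
  · simp_all [IsetL]

lemma toOrthSum_pOpL {p q : Option ℕ × Option L} (hp : p ∈ EsetL Fs L) (hq : q ∈ EsetL Fs L) :
    toOrthSum Fs κ (pOpL p q) = osOp Fs κ (toOrthSum Fs κ p) (toOrthSum Fs κ q) := by
  obtain ⟨x, y⟩ := p
  obtain ⟨x', y'⟩ := q
  rcases hp with ⟨-, rfl⟩ | ⟨⟨n, hn, rfl⟩, ⟨a, -, rfl⟩⟩
  · simp [pOpL, eOp, toOrthSum]
  rcases hq with ⟨-, rfl⟩ | ⟨⟨m, hm, rfl⟩, ⟨b, -, rfl⟩⟩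
  · simp [pOpL, eOp, toOrthSum]
  rw [Set.mem_compl_iff] at hn hm
  by_cases hab : a = b
  · subst hab
    by_cases ha : a ∈ κ
    · simp [pOpL, eOp, maxOp, toOrthSum, ha]
    · rcases le_total n m with h | h
      · simp [pOpL, eOp, maxOp, toOrthSum, osOp, ha, hn, hm, h]
      · simp [pOpL, eOp, maxOp, toOrthSum, osOp, ha, hn, hm, h]
        omega
  · simp only [pOpL, eOp, maxOp, toOrthSum, Option.some.injEq, hab, if_false]
    split_ifs <;> simp [osOp, hab]

lemma toOrthSum_eq_some_iff {p : Option ℕ × Option L}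
    {t : {n : ℕ // n ∈ Fsᶜ} × {a : L // a ∉ κ}} :
    toOrthSum Fs κ p = some t ↔ p = (some t.1.1, some t.2.1) := by
  constructor
  · obtain ⟨_ | n, _ | a⟩ := p <;> simp only [toOrthSum, reduceCtorEq, false_implies]
    split_ifs
    · rintro ⟨⟩; rfl
    · simp
  · rintro rfl
    simp [toOrthSum, t.1.2, t.2.2]

lemma reesSetoidL_iff (a b : EsetL Fs L) :
    reesSetoidL Fs κ a b ↔ toOrthSum Fs κ a = toOrthSum Fs κ b := by
  constructor
  · rintro (rfl | ⟨ha, hb⟩)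
    · rfl
    · rw [(toOrthSum_eq_none_iff a.2).2 ha, (toOrthSum_eq_none_iff b.2).2 hb]
  · intro h
    cases hta : toOrthSum Fs κ a with
    | none =>
      exact Or.inr ⟨(toOrthSum_eq_none_iff a.2).1 hta, (toOrthSum_eq_none_iff b.2).1 (h ▸ hta)⟩
    | some t => exact Or.inl (Subtype.ext ((toOrthSum_eq_some_iff.1 hta).trans
        (toOrthSum_eq_some_iff.1 (h ▸ hta)).symm))

variable (Fs κ) in
noncomputable def reesQuotientEquiv : Quotient (reesSetoidL Fs κ) ≃ OrthSum Fs κ :=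
  Equiv.ofBijective
    (Quotient.lift (fun a : EsetL Fs L => toOrthSum Fs κ a.1) fun a b h =>
      (reesSetoidL_iff a b).1 h) <| by
    refine ⟨fun x y => Quotient.inductionOn₂ x y fun a b h =>
      Quotient.sound ((reesSetoidL_iff a b).2 h), ?_⟩
    rintro (_ | t)
    · exact ⟨Quotient.mk _ ⟨(none, none), Or.inl ⟨trivial, rfl⟩⟩, rfl⟩
    · exact ⟨Quotient.mk _ ⟨(some t.1.1, some t.2.1), Or.inr ⟨⟨_, t.1.2, rfl⟩, ⟨_, trivial, rfl⟩⟩⟩,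
        toOrthSum_eq_some_iff.2 rfl⟩

lemma reesQuotientEquiv_mk (a : EsetL Fs L) :
    reesQuotientEquiv Fs κ (Quotient.mk _ a) = toOrthSum Fs κ a.1 := rfl

lemma continuous_reesQuotientEquiv (F : Filter ℕ) :
    Continuous[qTopL F Fs κ, ⊥] (reesQuotientEquiv Fs κ) := by
  let _ : TopologicalSpace (Option ℕ) := nfTop F
  let _ : TopologicalSpace (Option L) := ⊥
  let _ : TopologicalSpace (OrthSum Fs κ) := ⊥
  have : DiscreteTopology (Option L) := ⟨rfl⟩
  have : DiscreteTopology (OrthSum Fs κ) := ⟨rfl⟩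
  refine continuous_coinduced_dom.2 (continuous_discrete_rng.2 ?_)
  rintro (_ | t)
  · have hpre : (reesQuotientEquiv Fs κ ∘ Quotient.mk _) ⁻¹' {none} =
        Subtype.val ⁻¹' (Prod.snd ⁻¹' {y : Option L | ∀ a, y = some a → a ∈ κ}) := by
      ext ⟨p, hp⟩
      exact (toOrthSum_eq_none_iff hp).trans (mem_IsetL_iff hp)
    rw [hpre]
    exact ((isOpen_discrete _).preimage continuous_snd).preimage continuous_subtype_val
  · have hpre : (reesQuotientEquiv Fs κ ∘ Quotient.mk _) ⁻¹' {some t} =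
        Subtype.val ⁻¹' ({some t.1.1} ×ˢ {some t.2.1}) := by
      ext ⟨p, hp⟩
      simp [reesQuotientEquiv_mk, toOrthSum_eq_some_iff]
    rw [hpre]
    refine IsOpen.preimage continuous_subtype_val (IsOpen.prod ?_ (isOpen_discrete _))
    exact fun h => by simp at h

end Rees

section NotHComplete

local instance {α : Type*} : TopologicalSpace (Option α) := ⊥

local instance {α : Type*} : DiscreteTopology (Option α) := ⟨rfl⟩

lemma isTopSemilattice_eOp {α : Type*} : IsTopSemilattice (Option α) eOp := by
  refine ⟨inferInstance, fun a b => ?_, fun a => if_pos rfl, fun a b c => ?_,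
    continuous_of_discreteTopology⟩
  · unfold eOp; split_ifs <;> simp_all
  · unfold eOp; by_cases hab : a = b <;> by_cases hbc : b = c <;> simp_all

variable {Fs : Set ℕ} {L : Type u} {κ : Set L}

open Classical in
noncomputable def chainCoord (a : {a : L // a ∉ κ}) : OrthSum Fs κ → ℕ∞
  | some p => if p.2 = a then (p.1.1 : ℕ∞) else ⊤
  | none => ⊤

lemma chainCoord_osOp (a : {a : L // a ∉ κ}) (s t : OrthSum Fs κ) :
    chainCoord a (osOp Fs κ s t) = chainCoord a s ⊔ chainCoord a t := by
  rcases s with _ | ⟨⟨n, hn⟩, b⟩ <;> rcases t with _ | ⟨⟨m, hm⟩, c⟩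
  all_goals try simp [chainCoord, osOp]
  by_cases hbc : b = c
  · subst hbc
    split_ifs <;> simp_all [le_of_lt, not_le]
  · split_ifs <;> simp_all

lemma map_snd_osOp (s t : OrthSum Fs κ) :
    (osOp Fs κ s t).map Prod.snd = eOp (s.map Prod.snd) (t.map Prod.snd) := by
  rcases s with _ | ⟨⟨n, hn⟩, b⟩ <;> rcases t with _ | ⟨⟨m, hm⟩, c⟩
  all_goals try simp [eOp, osOp]
  split_ifs <;> simp_all


noncomputable def orthSumEmbedding (s : OrthSum Fs κ) :
    ({a : L // a ∉ κ} → ℕ∞) × Option {a : L // a ∉ κ} :=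
  (fun a => chainCoord a s, s.map Prod.snd)

lemma isEmbedding_orthSumEmbedding : IsEmbedding (orthSumEmbedding (Fs := Fs) (κ := κ)) := by
  refine IsEmbedding.of_isOpen_preimage_singleton ?_
  rintro (_ | ⟨⟨n, hn⟩, a⟩)
  · refine ⟨Set.univ ×ˢ {none}, isOpen_univ.prod (isOpen_discrete _), ?_⟩
    ext s
    simp [orthSumEmbedding]
  · refine ⟨((fun φ : {a : L // a ∉ κ} → ℕ∞ => φ a) ⁻¹' {(n : ℕ∞)}) ×ˢ {some a},
      ((ENat.isOpen_singleton (ENat.natCast_ne_top n)).preimage (continuous_apply a)).prod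
        (isOpen_discrete _), ?_⟩
    ext (_ | ⟨⟨m, hm⟩, b⟩)
    · simp [orthSumEmbedding]
    · simp only [orthSumEmbedding, chainCoord, Set.mem_preimage, Set.mem_prod,
        Set.mem_singleton_iff, Option.map_some, Option.some.injEq, Prod.mk.injEq,
        Subtype.mk.injEq]
      constructor
      · rintro ⟨h, rfl⟩
        simpa using h
      · rintro ⟨rfl, rfl⟩
        simp

lemma not_isClosed_range_orthSumEmbedding (hinf : Fsᶜ.Infinite) (a₀ : {a : L // a ∉ κ}) :
    ¬ IsClosed (Set.range (orthSumEmbedding (Fs := Fs) (κ := κ))) := by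
  classical
  have hlim : ((⊤ : {a : L // a ∉ κ} → ℕ∞), some a₀) ∈
      closure (Set.range (orthSumEmbedding (Fs := Fs) (κ := κ))) := by
    refine mem_closure_of_frequently_of_tendsto
      (f := fun n : ℕ => ((fun a => if a₀ = a then (n : ℕ∞) else ⊤), some a₀)) (b := atTop)
      ((Nat.frequently_atTop_iff_infinite.2 hinf).mono fun n hn => ⟨some (⟨n, hn⟩, a₀), ?_⟩) ?_
    · rfl
    · refine (tendsto_pi_nhds.2 fun a => ?_).prodMk_nhds tendsto_const_nhds
      by_cases h : a₀ = a
      · simp only [h, if_true]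
        exact ENat.tendsto_nhds_top_iff_natCast_lt.2 fun k =>
          (eventually_gt_atTop k).mono fun n hn => by exact_mod_cast hn
      · simp only [h, if_false]
        exact tendsto_const_nhds
  have hnot : ((⊤ : {a : L // a ∉ κ} → ℕ∞), some a₀) ∉
      Set.range (orthSumEmbedding (Fs := Fs) (κ := κ)) := by
    rintro ⟨_ | ⟨⟨n, hn⟩, b⟩, hs⟩
    · simp [orthSumEmbedding] at hs
    · simp only [orthSumEmbedding, chainCoord, Prod.mk.injEq, Option.map_some,
        Option.some.injEq] at hs
      obtain ⟨hs, rfl⟩ := hs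
      simpa using congrFun hs b
  exact fun hc => hnot (hc.closure_eq ▸ hlim)

lemma not_hComplete_orthSum (hinf : Fsᶜ.Infinite) (a₀ : {a : L // a ∉ κ}) :
    ¬ HComplete.{u, max u w} (OrthSum Fs κ) (osOp Fs κ) :=
  not_hComplete_of_isEmbedding ((IsTopSemilattice.pi fun _ => IsTopSemilattice.sup).prod
    isTopSemilattice_eOp) isEmbedding_orthSumEmbedding
    (fun s t => Prod.ext (funext fun a => chainCoord_osOp a s t) (map_snd_osOp s t))
    (not_isClosed_range_orthSumEmbedding hinf a₀)

end NotHComplete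

theorem reesQuotientL_iso_orthogonal_sum_general (F : Filter ℕ)
    (Fs : Set ℕ) (hinf : Fsᶜ.Infinite) (L : Type)
    (κ : Set L) (hκ : κ ≠ Set.univ)
    (hsub : ∀ p ∈ EsetL Fs L, ∀ q ∈ EsetL Fs L, pOpL p q ∈ EsetL Fs L) :
    (∃ opQ : Quotient (reesSetoidL Fs κ) → Quotient (reesSetoidL Fs κ) →
        Quotient (reesSetoidL Fs κ),
      (∀ a b : EsetL Fs L,
        opQ (Quotient.mk (reesSetoidL Fs κ) a) (Quotient.mk (reesSetoidL Fs κ) b) =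
          Quotient.mk (reesSetoidL Fs κ) ⟨pOpL a.1 b.1, hsub a.1 a.2 b.1 b.2⟩) ∧
      ∃ e : Quotient (reesSetoidL Fs κ) ≃ Option ({n : ℕ // n ∈ Fsᶜ} × {a : L // a ∉ κ}),
        @Continuous _ _ (qTopL F Fs κ) ⊥ e ∧
        @Continuous _ _ ⊥ (qTopL F Fs κ) e.symm ∧
        ∀ x y, e (opQ x y) = osOp Fs κ (e x) (e y)) ∧
    ¬ @HComplete (Option ({n : ℕ // n ∈ Fsᶜ} × {a : L // a ∉ κ})) ⊥ (osOp Fs κ) := by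
  obtain ⟨a₀, ha₀⟩ := (Set.ne_univ_iff_exists_notMem κ).mp hκ
  let e := reesQuotientEquiv Fs κ
  refine ⟨⟨fun x y => e.symm (osOp Fs κ (e x) (e y)), fun a b => ?_, e,
    continuous_reesQuotientEquiv F, continuous_bot, fun x y => e.apply_symm_apply _⟩,
    not_hComplete_orthSum hinf ⟨a₀, ha₀⟩⟩
  rw [Equiv.symm_apply_eq, reesQuotientEquiv_mk, reesQuotientEquiv_mk, reesQuotientEquiv_mk,
    toOrthSum_pOpL a.2 b.2]

/-- the Rees quotient E/I_κ is topologically isomorphic to the orthogonal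
sum of λ-many copies of the discrete semilattice (ℕ, max) with an isolated zero adjoined,
i.e. to the discrete semilattice on {0} ∪ ((ℕ \ F) × (λ \ κ)) with
(n,a)·(m,a) = (max(n,m),a) and (n,a)·(m,b) = 0 for a ≠ b; this discrete semilattice
is not 𝓗-complete. -/
theorem reesQuotientL_iso_orthogonal_sum (F : Filter ℕ) (hF : FreeF F)
    (Fs : Set ℕ) (hFs : Fs ∈ F) (hinf : Fsᶜ.Infinite) (L : Type) [Infinite L]
    (κ : Set L) (hκ : κ ≠ Set.univ)
    (hsub : ∀ p ∈ EsetL Fs L, ∀ q ∈ EsetL Fs L, pOpL p q ∈ EsetL Fs L) :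
    (∃ opQ : Quotient (reesSetoidL Fs κ) → Quotient (reesSetoidL Fs κ) →
        Quotient (reesSetoidL Fs κ),
      (∀ a b : EsetL Fs L,
        opQ (Quotient.mk (reesSetoidL Fs κ) a) (Quotient.mk (reesSetoidL Fs κ) b) =
          Quotient.mk (reesSetoidL Fs κ) ⟨pOpL a.1 b.1, hsub a.1 a.2 b.1 b.2⟩) ∧
      ∃ e : Quotient (reesSetoidL Fs κ) ≃ Option ({n : ℕ // n ∈ Fsᶜ} × {a : L // a ∉ κ}),
        @Continuous _ _ (qTopL F Fs κ) ⊥ e ∧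
        @Continuous _ _ ⊥ (qTopL F Fs κ) e.symm ∧
        ∀ x y, e (opQ x y) = osOp Fs κ (e x) (e y)) ∧
    ¬ @HComplete (Option ({n : ℕ // n ∈ Fsᶜ} × {a : L // a ∉ κ})) ⊥ (osOp Fs κ) :=
  reesQuotientL_iso_orthogonal_sum_general F Fs hinf L κ hκ hsub
end
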